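/- There exist constants C and N such that for every n ≥ N the following holds under the Setup with t = 2, together with the Apex assumption: for every vertex x ∈ {1,…,n} with x ≠ u, | f({u,x}) − 1/2 + 1/(4n) | ≤ C/n². -/

import Mathlib

open Finset Matrix

/-- A simplicial complex on vertex set `{1,…,n}` (modelled as `Fin n`):
a collection of nonempty subsets closed under taking nonempty subsets
and containing every singleton. -/
structure SimplicialComplex (n : ℕ) where
  faces : Finset (Finset (Fin n))
  nonempty_mem : ∀ F ∈ faces, F.Nonempty
  down_closed : ∀ F ∈ faces, ∀ G : Finset (Fin n), G ⊆ F → G.Nonempty → G ∈ faces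
  singleton_mem : ∀ x : Fin n, {x} ∈ faces

namespace SimplicialComplex

variable {n : ℕ}

/-- `S_i(K)`: the `i`-faces, i.e. faces of cardinality `i+1`. -/
def iFaces (K : SimplicialComplex n) (i : ℕ) : Finset (Finset (Fin n)) :=
  K.faces.filter (fun F => F.card = i + 1)

/-- `K` is pure `r`-dimensional: every maximal face has cardinality `r+1`. -/
def IsPure (K : SimplicialComplex n) (r : ℕ) : Prop :=
  ∀ F ∈ K.faces, (∀ G ∈ K.faces, F ⊆ G → F = G) → F.card = r + 1

/-- The signless incidence matrix `B_{i+1}(K)`, with rows indexed by `S_i(K)` and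
columns indexed by `S_{i+1}(K)`; entry is `1` if the row face is contained in the
column face, `0` otherwise. -/
def signlessInc (K : SimplicialComplex n) (i : ℕ) :
    Matrix ↥(K.iFaces i) ↥(K.iFaces (i+1)) ℝ :=
  Matrix.of fun F Fb => if (F : Finset (Fin n)) ⊆ (Fb : Finset (Fin n)) then 1 else 0

/-- The `i`-th up signless Laplacian `Q_i^{up}(K) = B_{i+1} B_{i+1}ᵀ`. -/
def Qup (K : SimplicialComplex n) (i : ℕ) :
    Matrix ↥(K.iFaces i) ↥(K.iFaces i) ℝ :=
  K.signlessInc i * (K.signlessInc i)ᵀ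

/-- The signless Laplacian spectral radius `q_i(K)`: the largest eigenvalue of
`Q_i^{up}(K)`. -/
noncomputable def specRad (K : SimplicialComplex n) (i : ℕ) : ℝ :=
  sSup {μ : ℝ | ∃ v : ↥(K.iFaces i) → ℝ, v ≠ 0 ∧ (K.Qup i).mulVec v = μ • v}

/-- The signed boundary matrix `∂_{i+1}(K)`, with rows indexed by `S_i(K)` and columns
indexed by `S_{i+1}(K)`: the entry in position `(F ∖ {v_j}, F)` is `(-1)^j`, where the
vertices of `F` are listed in increasing order `v_0 < ⋯ < v_{i+1}`. -/
def signedBoundary (K : SimplicialComplex n) (i : ℕ) :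
    Matrix ↥(K.iFaces i) ↥(K.iFaces (i+1)) ℝ :=
  Matrix.of fun G Fb =>
    if (G : Finset (Fin n)) ⊆ (Fb : Finset (Fin n)) then
      ∑ v ∈ (Fb : Finset (Fin n)) \ (G : Finset (Fin n)),
        (-1 : ℝ) ^ (((Fb : Finset (Fin n)).filter (fun w => w < v)).card)
    else 0

/-- The rank of `∂_i(K)` (with `∂_0 := 0`). -/
noncomputable def boundaryRank (K : SimplicialComplex n) : ℕ → ℕ
  | 0 => 0
  | (i+1) => (K.signedBoundary i).rank

/-- The `i`-th Betti number (with real coefficients):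
`β_i(K) = nullity(∂_i(K)) − rank(∂_{i+1}(K))`. -/
noncomputable def betti (K : SimplicialComplex n) (i : ℕ) : ℕ :=
  ((K.iFaces i).card - K.boundaryRank i) - K.boundaryRank (i+1)

/-- For a vector `f` indexed by `S_i(K)` and a set `Fb`, the quantity
`f(∂Fb) = ∑_{F ∈ S_i(K), F ⊆ Fb} f(F)`. -/
noncomputable def bSum (K : SimplicialComplex n) (i : ℕ) (f : ↥(K.iFaces i) → ℝ)
    (Fb : Finset (Fin n)) : ℝ :=
  ∑ F : ↥(K.iFaces i), if (F : Finset (Fin n)) ⊆ Fb then f F else 0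

/-- `N^d(F)`: the set of down neighbors of the 2-face `F`, i.e. the 2-faces distinct
from `F` sharing a 1-face with `F`. -/
def downNbrs (K : SimplicialComplex n) (F : Finset (Fin n)) : Finset (Finset (Fin n)) :=
  (K.iFaces 2).filter (fun F' => F' ≠ F ∧ (F' ∩ F).card = 2)

/-- `N^d(F,x) = { {x} ∪ G ∈ S_2(K) : G ⊂ F, |G| = 2 }`. -/
def downNbrsAt (K : SimplicialComplex n) (F : Finset (Fin n)) (x : Fin n) :
    Finset (Finset (Fin n)) :=
  (K.iFaces 2).filter (fun F' => ∃ G ⊆ F, G.card = 2 ∧ F' = insert x G)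

end SimplicialComplex

open SimplicialComplex

/-- `K(n,r,t)`: pure `r`-dimensional complexes on `{1,…,n}` with `β_r = t`. -/
def Kfam (n r t : ℕ) : Set (SimplicialComplex n) :=
  {K | K.IsPure r ∧ K.betti r = t}

namespace SimplicialComplex

variable {n : ℕ}

/-- `A = {1,…,n} ∖ F₀`. -/
def Aset (F0 : Finset (Fin n)) : Finset (Fin n) := Finset.univ \ F0

/-- `A_i = { x ∈ A : |N^d(F₀,x)| = i }`. -/
def Ai (K : SimplicialComplex n) (F0 : Finset (Fin n)) (i : ℕ) : Finset (Fin n) :=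
  (Aset F0).filter (fun x => (K.downNbrsAt F0 x).card = i)

/-- `A_{≤i} = { x ∈ A : |N^d(F₀,x)| ≤ i }`. -/
def Ale (K : SimplicialComplex n) (F0 : Finset (Fin n)) (i : ℕ) : Finset (Fin n) :=
  (Aset F0).filter (fun x => (K.downNbrsAt F0 x).card ≤ i)

/-- `A_2^x = { y ∈ A_2 : (F₀ ∖ {x}) ∪ {y} ∉ S_2(K) }`. -/
def A2x (K : SimplicialComplex n) (F0 : Finset (Fin n)) (x : Fin n) : Finset (Fin n) :=
  (K.Ai F0 2).filter (fun y => insert y (F0.erase x) ∉ K.iFaces 2)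

/-- `M_u`: the set of 2-faces of `K` not containing `u`. -/
def Mu (K : SimplicialComplex n) (u : Fin n) : Finset (Finset (Fin n)) :=
  (K.iFaces 2).filter (fun F => u ∉ F)

/-- `M_u(vw)`: members of `M_u` containing `{v,w}`. -/
def MuVW (K : SimplicialComplex n) (u v w : Fin n) : Finset (Finset (Fin n)) :=
  (K.Mu u).filter (fun F => v ∈ F ∧ w ∈ F)

/-- `M_u^c = S_2(K) ∖ M_u`. -/
def Muc (K : SimplicialComplex n) (u : Fin n) : Finset (Finset (Fin n)) :=
  K.iFaces 2 \ K.Mu u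

/-- `d_{M_u}(G) = |{ F ∈ M_u : G ⊂ F }|`. -/
def dMu (K : SimplicialComplex n) (u : Fin n) (G : Finset (Fin n)) : ℕ :=
  ((K.Mu u).filter (fun F => G ⊆ F)).card

/-- Apex assumption: every 3-subset of the vertex set containing `u` is a 2-face of `K`. -/
def Apex (K : SimplicialComplex n) (u : Fin n) : Prop :=
  ∀ F : Finset (Fin n), F.card = 3 → u ∈ F → F ∈ K.faces

/-- The Setup of the paper: `K ∈ K(n,2,t)` maximizes the signless Laplacian spectral
radius; `f` is an entrywise nonnegative eigenvector of `Q_1^{up}(K)` for the eigenvalue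
`q₁(K)`, normalized so that `max { f(∂F) : F ∈ S_2(K) } = 1`, and `F₀ = {u,v,w}`
is a 2-face attaining this maximum, with the labelling `|A_2^u| ≥ |A_2^v| ≥ |A_2^w|`. -/
def Setup (n t : ℕ) (K : SimplicialComplex n) (f : ↥(K.iFaces 1) → ℝ)
    (u v w : Fin n) : Prop :=
  K ∈ Kfam n 2 t ∧
  (∀ L ∈ Kfam n 2 t, L.specRad 1 ≤ K.specRad 1) ∧
  f ≠ 0 ∧ (∀ e, 0 ≤ f e) ∧
  (K.Qup 1).mulVec f = (K.specRad 1) • f ∧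
  ({u,v,w} : Finset (Fin n)) ∈ K.iFaces 2 ∧
  (∀ F ∈ K.iFaces 2, K.bSum 1 f F ≤ 1) ∧
  K.bSum 1 f {u,v,w} = 1 ∧
  (K.A2x {u,v,w} v).card ≤ (K.A2x {u,v,w} u).card ∧
  (K.A2x {u,v,w} w).card ≤ (K.A2x {u,v,w} v).card

/-- A face of the tented complex `T_n^r` with apex `u`: a nonempty subset of
`{u} ∪ A` for some `r`-subset `A` of the vertices other than `u`. -/
def TentFace (r : ℕ) (u : Fin n) (G : Finset (Fin n)) : Prop :=
  G.Nonempty ∧ ∃ A : Finset (Fin n), u ∉ A ∧ A.card = r ∧ G ⊆ insert u A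

end SimplicialComplex

/-!
Every triangle through the apex `u` is a face, so each face `F` of `M_u` spans with `u` a full
tetrahedron, whose boundary is a 2-cycle; these cycles are independent, hence `|M_u| ≤ β₂ = 2`.

Write `a_x = f{u,x}`, `G_x = ∑_y f{x,y}`, `S = ∑_x a_x` (all vertices `≠ u`) and let `E_x` be the
contribution of the faces of `M_u` through `x`, which is `O(1)`. The eigenvector equation at the
edges `{u,x}` and `{x,y}` reads `q a_x = (n-3) a_x + S + G_x` and
`q G_x = (n-3) a_x + S + G_x + E_x`. Summing over `x` traps `q` in `[2n-4, 2n-2]`; eliminating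
`G_x` gives `D a_x = q S + E_x` with `D ≥ n²`, so all the `a_x` agree up to `O(1/n²)`. Finally the
face `{u,v,w}` with `f(∂{u,v,w}) = 1` gives `q (a_v + a_w) = q - 1 - O(1/n)`, whence
`a_x = 1/2 - 1/(4n) + O(1/n²)`.
-/

lemma sum_eq_of_forall_eq_mul_add {ι : Type*} (V : Finset ι) {a L R : ι → ℝ} {c : ℝ}
    (h : ∀ x ∈ V, L x = c * a x + ∑ y ∈ V, a y + R x) :
    ∑ x ∈ V, L x = (c + V.card) * ∑ y ∈ V, a y + ∑ x ∈ V, R x := by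
  rw [Finset.sum_congr rfl h, Finset.sum_add_distrib, Finset.sum_add_distrib, ← Finset.mul_sum,
    Finset.sum_const, nsmul_eq_mul]
  ring

lemma mul_eq_add_of_eqns {q c a S G E : ℝ} (hA : q * a = c * a + S + G)
    (hG : q * G = c * a + S + G + E) : ((q - 1) * (q - c) - c) * a = q * S + E := by
  linear_combination (q - 1) * hA + hG

lemma le_and_le_of_sum_eqns {n q S G SE b : ℝ} (hn : 30 ≤ n) (hS0 : 0 ≤ S) (hb0 : 0 ≤ b)
    (hbG : b ≤ G) (hSb : 1 - b ≤ S) (hqb : q * b ≤ 3) (hSE : SE ≤ 18)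
    (h1 : q * S = (2 * n - 4) * S + G) (h2 : q * G = (2 * n - 4) * S + G + SE) :
    2 * n - 4 ≤ q ∧ q ≤ 2 * n - 2 := by
  have hSpos : 0 < S := by
    refine hS0.lt_of_ne fun hS => ?_
    subst hS
    linarith
  have hlow : 2 * n - 4 ≤ q := by
    by_contra! hq
    nlinarith
  have hShalf : 1 / 2 ≤ S := by nlinarith
  refine ⟨hlow, ?_⟩
  by_contra! hq
  have key : (q - 1) * (q - 2 * n + 4) * S = (2 * n - 4) * S + SE := by
    linear_combination (q - 1) * h1 + h2
  nlinarith [mul_lt_mul_of_pos_right (mul_lt_mul'' (show 2 * n - 3 < q - 1 by linarith)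
    (show 2 < q - 2 * n + 4 by linarith) (by linarith) (by norm_num)) hSpos]

lemma abs_le_div_of_mul_eq {D c x y k : ℝ} (hc : 0 < c) (hcD : c ≤ D) (h : D * x = y)
    (hy : |y| ≤ k) : |x| ≤ k / c := by
  rw [le_div_iff₀ hc]
  calc |x| * c ≤ |x| * D := mul_le_mul_of_nonneg_left hcD (abs_nonneg x)
    _ = |y| := by rw [← h, abs_mul, abs_of_pos (hc.trans_le hcD), mul_comm]
    _ ≤ k := hy

lemma abs_half_sub_le {n q s ε : ℝ} (hn : 20 ≤ n) (hq : 2 * n - 4 ≤ q) (hq' : q ≤ 2 * n - 2)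
    (hs : q * s = q - 1 - ε) (hε0 : 0 ≤ ε) (hε : q * ε ≤ 18) :
    |s / 2 - 1 / 2 + 1 / (4 * n)| ≤ 6 / n ^ 2 := by
  have hn0 : 0 < n := by linarith
  have hε' : 2 * n * ε ≤ 20 := by nlinarith
  have h := abs_le_div_of_mul_eq (D := 4 * n * q) (x := s / 2 - 1 / 2 + 1 / (4 * n))
    (y := q - 2 * n - 2 * n * ε) (k := 24)
    (by positivity : 0 < 4 * n ^ 2) (by nlinarith) (by field_simp; linear_combination 4 * n * hs)
    (abs_le.2 ⟨by linarith, by nlinarith⟩)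
  calc _ ≤ 24 / (4 * n ^ 2) := h
    _ = 6 / n ^ 2 := by field_simp; norm_num

lemma sum_ite_mem_le {α : Type*} [DecidableEq α] (s F : Finset α) {c : ℝ} (hc : 0 ≤ c) :
    ∑ x ∈ s, (if x ∈ F then c else 0) ≤ F.card * c := by
  rw [Finset.sum_ite_mem, Finset.sum_const, nsmul_eq_mul]
  gcongr
  exact Finset.inter_subset_right

lemma sum_ite_pair_subset_le {α : Type*} [DecidableEq α] (x : α) (t F : Finset α) {c : ℝ}
    (hc : 0 ≤ c) :
    ∑ y ∈ t, (if {x, y} ⊆ F then c else 0) ≤ if x ∈ F then F.card * c else 0 := by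
  by_cases hx : x ∈ F
  · simpa [Finset.insert_subset_iff, hx] using sum_ite_mem_le t F hc
  · simp [Finset.insert_subset_iff, hx]

namespace SimplicialComplex

variable {n : ℕ} {K : SimplicialComplex n} {u : Fin n}

lemma mem_iFaces {i : ℕ} {F : Finset (Fin n)} :
    F ∈ K.iFaces i ↔ F ∈ K.faces ∧ F.card = i + 1 := Finset.mem_filter

lemma card_eq_three_of_mem_iFaces_two {F : Finset (Fin n)} (hF : F ∈ K.iFaces 2) : F.card = 3 :=
  (mem_iFaces.1 hF).2

lemma mem_Mu {F : Finset (Fin n)} : F ∈ K.Mu u ↔ F ∈ K.iFaces 2 ∧ u ∉ F := Finset.mem_filter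

lemma mem_iFaces_two_of_apex (hA : K.Apex u) {F : Finset (Fin n)} (hF : F.card = 3)
    (hu : u ∈ F) : F ∈ K.iFaces 2 :=
  mem_iFaces.2 ⟨hA F hF hu, hF⟩

lemma mem_iFaces_one_of_apex (hA : K.Apex u) (hn : 3 ≤ n) {p : Finset (Fin n)}
    (hp : p.card = 2) : p ∈ K.iFaces 1 := by
  obtain ⟨z, hz, hzu⟩ : ∃ z ∉ p, u ∈ insert z p := by
    by_cases hu : u ∈ p
    · obtain ⟨z, hz⟩ : (pᶜ).Nonempty := by
        rw [← Finset.card_pos, Finset.card_compl, Fintype.card_fin]; omega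
      exact ⟨z, Finset.mem_compl.1 hz, Finset.mem_insert_of_mem hu⟩
    · exact ⟨u, hu, Finset.mem_insert_self u p⟩
  have hT : insert z p ∈ K.faces := hA _ (by rw [Finset.card_insert_of_notMem hz, hp]) hzu
  exact mem_iFaces.2 ⟨K.down_closed _ hT p (Finset.subset_insert z p)
    (Finset.card_pos.1 (by omega)), hp⟩

lemma bSum_of_mem {i : ℕ} {f : ↥(K.iFaces i) → ℝ} {p : Finset (Fin n)} (hp : p ∈ K.iFaces i) :
    K.bSum i f p = f ⟨p, hp⟩ := by
  refine (Fintype.sum_eq_single ⟨p, hp⟩ fun F hF => if_neg fun hsub => hF ?_).trans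
    (if_pos subset_rfl)
  exact Subtype.ext (Finset.eq_of_subset_of_card_le hsub
    (by rw [(mem_iFaces.1 F.2).2, (mem_iFaces.1 hp).2]))

lemma bSum_nonneg {i : ℕ} {f : ↥(K.iFaces i) → ℝ} (hf : ∀ e, 0 ≤ f e) (F : Finset (Fin n)) :
    0 ≤ K.bSum i f F :=
  Finset.sum_nonneg fun e _ => by split_ifs <;> simp [hf]

lemma bSum_eq_sum_filter {i : ℕ} (f : ↥(K.iFaces i) → ℝ) (T : Finset (Fin n)) :
    K.bSum i f T = ∑ p ∈ (K.iFaces i).filter (· ⊆ T), K.bSum i f p := by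
  rw [Finset.sum_filter, ← Finset.sum_coe_sort]
  exact Finset.sum_congr rfl fun p _ => by rw [bSum_of_mem p.2]

lemma subset_triple_card_two_iff {a b c : Fin n} (hab : a ≠ b) (hac : a ≠ c) (hbc : b ≠ c)
    {p : Finset (Fin n)} :
    p ⊆ {a, b, c} ∧ p.card = 2 ↔ p = {a, b} ∨ p = {a, c} ∨ p = {b, c} := by
  constructor
  · rintro ⟨hp, h2⟩
    obtain ⟨x, y, hxy, rfl⟩ := Finset.card_eq_two.1 h2
    simp only [Finset.insert_subset_iff, Finset.singleton_subset_iff, Finset.mem_insert,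
      Finset.mem_singleton] at hp
    rcases hp with ⟨rfl | rfl | rfl, rfl | rfl | rfl⟩ <;> simp_all [Finset.pair_comm]
  · rintro (rfl | rfl | rfl) <;> exact ⟨by grind, Finset.card_pair ‹_›⟩

lemma bSum_triple {f : ↥(K.iFaces 1) → ℝ} {a b c : Fin n} (hT : {a, b, c} ∈ K.faces)
    (hab : a ≠ b) (hac : a ≠ c) (hbc : b ≠ c) :
    K.bSum 1 f {a, b, c} = K.bSum 1 f {a, b} + K.bSum 1 f {a, c} + K.bSum 1 f {b, c} := by
  have hfilter : (K.iFaces 1).filter (· ⊆ {a, b, c}) = {{a, b}, {a, c}, {b, c}} := by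
    ext p
    rw [Finset.mem_filter, mem_iFaces, Finset.mem_insert, Finset.mem_insert, Finset.mem_singleton,
      ← subset_triple_card_two_iff hab hac hbc]
    exact ⟨fun h => ⟨h.2, h.1.2⟩, fun h => ⟨⟨K.down_closed _ hT p h.1
      (Finset.card_pos.1 (by omega)), h.2⟩, h.1⟩⟩
  have hc_ab : c ∉ ({a, b} : Finset (Fin n)) := by simp [hac.symm, hbc.symm]
  have hb_ac : b ∉ ({a, c} : Finset (Fin n)) := by simp [hab.symm, hbc]
  rw [bSum_eq_sum_filter, hfilter, Finset.sum_insert, Finset.sum_pair, add_assoc]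
  · exact fun h => hb_ac (h ▸ by simp)
  · simp only [Finset.mem_insert, Finset.mem_singleton, not_or]
    exact ⟨fun h => hc_ab (h ▸ by simp), fun h => hc_ab (h ▸ by simp)⟩

lemma signlessInc_transpose_mulVec {i : ℕ} (f : ↥(K.iFaces i) → ℝ) (F : ↥(K.iFaces (i + 1))) :
    (K.signlessInc i)ᵀ.mulVec f F = K.bSum i f F := by
  simp only [Matrix.mulVec, dotProduct, Matrix.transpose_apply, signlessInc, Matrix.of_apply,
    bSum, ite_mul, one_mul, zero_mul]

lemma mul_bSum_eq_sum_of_eigen {i : ℕ} {q : ℝ} {f : ↥(K.iFaces i) → ℝ}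
    (hf : (K.Qup i).mulVec f = q • f) {p : Finset (Fin n)} (hp : p ∈ K.iFaces i) :
    q * K.bSum i f p = ∑ F ∈ (K.iFaces (i + 1)).filter (p ⊆ ·), K.bSum i f F := by
  have h := congrFun hf ⟨p, hp⟩
  rw [Qup, ← Matrix.mulVec_mulVec, Pi.smul_apply, smul_eq_mul] at h
  rw [bSum_of_mem hp, ← h, Finset.sum_filter, ← Finset.sum_coe_sort]
  simp only [Matrix.mulVec, dotProduct, signlessInc, Matrix.of_apply, ite_mul, one_mul, zero_mul]
  exact Finset.sum_congr rfl fun F _ => by rw [← signlessInc_transpose_mulVec]; rfl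

lemma filter_superset_apex_edge (hA : K.Apex u) {x : Fin n} (hx : x ≠ u) :
    (K.iFaces 2).filter ({u, x} ⊆ ·)
      = (({u}ᶜ : Finset (Fin n)).erase x).image (insert · {u, x}) := by
  ext F
  have hux : ({u, x} : Finset (Fin n)).card = 2 := Finset.card_pair hx.symm
  rw [Finset.mem_filter, Finset.mem_image, mem_iFaces]
  have key := Finset.exists_eq_insert_iff (s := ({u, x} : Finset (Fin n))) (t := F)
  simp only [Finset.mem_erase, Finset.mem_compl, Finset.mem_singleton, Finset.mem_insert,
    not_or] at key ⊢
  rw [hux] at key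
  constructor
  · rintro ⟨⟨-, hF⟩, hsub⟩
    obtain ⟨y, hy, rfl⟩ := key.2 ⟨hsub, hF.symm⟩
    exact ⟨y, ⟨hy.2, hy.1⟩, rfl⟩
  · rintro ⟨y, ⟨hyx, hyu⟩, rfl⟩
    obtain ⟨hsub, hc⟩ := key.1 ⟨y, ⟨hyu, hyx⟩, rfl⟩
    exact ⟨⟨hA _ hc.symm (hsub (by simp)), hc.symm⟩, hsub⟩

lemma filter_superset_base_edge (hA : K.Apex u) {p : Finset (Fin n)} (hp : p.card = 2)
    (hu : u ∉ p) :
    (K.iFaces 2).filter (p ⊆ ·) = insert (insert u p) ((K.Mu u).filter (p ⊆ ·)) := by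
  ext F
  simp only [Finset.mem_filter, Finset.mem_insert, mem_Mu]
  by_cases huF : u ∈ F
  · have hc : (insert u p).card = 3 := by rw [Finset.card_insert_of_notMem hu, hp]
    constructor
    · rintro ⟨hF, hsub⟩
      exact Or.inl (Finset.eq_of_subset_of_card_le (Finset.insert_subset huF hsub)
        (by rw [card_eq_three_of_mem_iFaces_two hF, hc])).symm
    · rintro (rfl | ⟨⟨-, h⟩, -⟩)
      · exact ⟨mem_iFaces.2 ⟨hA _ hc huF, hc⟩, Finset.subset_insert u p⟩
      · exact absurd huF h
  · have hne : F ≠ insert u p := fun h => huF (h ▸ Finset.mem_insert_self u p)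
    simp [hne, huF]

noncomputable def muCofaceSum (K : SimplicialComplex n) (u : Fin n) (f : ↥(K.iFaces 1) → ℝ)
    (p : Finset (Fin n)) : ℝ :=
  ∑ F ∈ (K.Mu u).filter (p ⊆ ·), K.bSum 1 f F

lemma cast_card_compl_singleton (u : Fin n) : (({u}ᶜ : Finset (Fin n)).card : ℝ) = n - 1 := by
  rw [Finset.card_compl, Finset.card_singleton, Fintype.card_fin, Nat.cast_sub u.pos, Nat.cast_one]

section Eigenvector

variable {q : ℝ} {f : ↥(K.iFaces 1) → ℝ}

lemma sum_bSum_apex_triangle (hA : K.Apex u) {x : Fin n} (hx : x ≠ u) :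
    ∑ y ∈ ({u}ᶜ : Finset (Fin n)).erase x, K.bSum 1 f {u, x, y}
      = (n - 3) * K.bSum 1 f {u, x} + ∑ y ∈ ({u}ᶜ : Finset (Fin n)), K.bSum 1 f {u, y}
        + ∑ y ∈ ({u}ᶜ : Finset (Fin n)).erase x, K.bSum 1 f {x, y} := by
  have hxV : x ∈ ({u}ᶜ : Finset (Fin n)) := by simpa using hx
  have hcard : ((({u}ᶜ : Finset (Fin n)).erase x).card : ℝ) = n - 2 := by
    rw [Finset.card_erase_of_mem hxV, Nat.cast_pred (Finset.card_pos.2 ⟨x, hxV⟩),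
      cast_card_compl_singleton]
    ring
  have htri : ∀ y ∈ ({u}ᶜ : Finset (Fin n)).erase x,
      K.bSum 1 f {u, x, y} = K.bSum 1 f {u, x} + K.bSum 1 f {u, y} + K.bSum 1 f {x, y} := by
    intro y hy
    obtain ⟨hyx, hyu⟩ : y ≠ x ∧ y ≠ u := by simpa using hy
    exact bSum_triple (hA _ (Finset.card_triple_eq_three_iff.2 ⟨hx.symm, hyu.symm, hyx.symm⟩)
      (by simp)) hx.symm hyu.symm hyx.symm
  rw [Finset.sum_congr rfl htri, Finset.sum_add_distrib, Finset.sum_add_distrib,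
    Finset.sum_const, nsmul_eq_mul, hcard, Finset.sum_erase_eq_sub hxV]
  ring

lemma mul_bSum_apex_edge (hA : K.Apex u) (hn : 3 ≤ n) (hf : (K.Qup 1).mulVec f = q • f)
    {x : Fin n} (hx : x ≠ u) :
    q * K.bSum 1 f {u, x}
      = (n - 3) * K.bSum 1 f {u, x} + ∑ y ∈ ({u}ᶜ : Finset (Fin n)), K.bSum 1 f {u, y}
        + ∑ y ∈ ({u}ᶜ : Finset (Fin n)).erase x, K.bSum 1 f {x, y} := by
  rw [← sum_bSum_apex_triangle hA hx,
    mul_bSum_eq_sum_of_eigen hf (mem_iFaces_one_of_apex hA hn (Finset.card_pair hx.symm)),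
    filter_superset_apex_edge hA hx, Finset.sum_image]
  · exact Finset.sum_congr rfl fun y _ => by rw [Finset.insert_comm, Finset.pair_comm]
  · intro y hy y' _ h
    obtain ⟨hyu, hyx⟩ : y ≠ u ∧ y ≠ x := by simpa using hy
    exact (Finset.insert_inj (by simp [hyx, hyu])).1 h

lemma mul_bSum_base_edge (hA : K.Apex u) (hn : 3 ≤ n) (hf : (K.Qup 1).mulVec f = q • f)
    {p : Finset (Fin n)} (hp : p.card = 2) (hu : u ∉ p) :
    q * K.bSum 1 f p = K.bSum 1 f (insert u p) + K.muCofaceSum u f p := by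
  rw [mul_bSum_eq_sum_of_eigen hf (mem_iFaces_one_of_apex hA hn hp),
    filter_superset_base_edge hA hp hu, Finset.sum_insert (by simp [mem_Mu]), muCofaceSum]

lemma mul_sum_bSum_base_edge (hA : K.Apex u) (hn : 3 ≤ n) (hf : (K.Qup 1).mulVec f = q • f)
    {x : Fin n} (hx : x ≠ u) :
    q * ∑ y ∈ ({u}ᶜ : Finset (Fin n)).erase x, K.bSum 1 f {x, y}
      = (n - 3) * K.bSum 1 f {u, x} + ∑ y ∈ ({u}ᶜ : Finset (Fin n)), K.bSum 1 f {u, y}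
        + ∑ y ∈ ({u}ᶜ : Finset (Fin n)).erase x, K.bSum 1 f {x, y}
        + ∑ y ∈ ({u}ᶜ : Finset (Fin n)).erase x, K.muCofaceSum u f {x, y} := by
  rw [← sum_bSum_apex_triangle hA hx, ← Finset.sum_add_distrib, Finset.mul_sum]
  refine Finset.sum_congr rfl fun y hy => ?_
  obtain ⟨hyx, hyu⟩ : y ≠ x ∧ y ≠ u := by simpa using hy
  exact mul_bSum_base_edge hA hn hf (Finset.card_pair hyx.symm) (by simp [hx.symm, hyu.symm])

end Eigenvector

section Homology

def boundarySign (G H : Finset (Fin n)) : ℝ :=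
  ∑ v ∈ H \ G, (-1 : ℝ) ^ (H.filter (· < v)).card

lemma signedBoundary_apply {i : ℕ} (G : ↥(K.iFaces i)) (H : ↥(K.iFaces (i + 1))) :
    K.signedBoundary i G H
      = if (G : Finset (Fin n)) ⊆ H then boundarySign (G : Finset (Fin n)) H else 0 :=
  rfl

lemma boundarySign_insert {a : Fin n} {G : Finset (Fin n)} (ha : a ∉ G) :
    boundarySign G (insert a G) = (-1 : ℝ) ^ (G.filter (· < a)).card := by
  rw [boundarySign, Finset.insert_sdiff_cancel ha, Finset.sum_singleton, Finset.filter_insert,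
    if_neg (lt_irrefl a)]

lemma boundarySign_insert_ne_zero {a : Fin n} {G : Finset (Fin n)} (ha : a ∉ G) :
    boundarySign G (insert a G) ≠ 0 := by
  rw [boundarySign_insert ha]; exact pow_ne_zero _ (by norm_num)

lemma boundarySign_mul_add_boundarySign_mul {a b : Fin n} {G : Finset (Fin n)} (ha : a ∉ G)
    (hb : b ∉ G) (hab : a ≠ b) :
    boundarySign G (insert a G) * boundarySign (insert a G) (insert a (insert b G))
      + boundarySign G (insert b G) * boundarySign (insert b G) (insert a (insert b G)) = 0 := by
  have haG : a ∉ insert b G := by simp [hab, ha]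
  have hbG : b ∉ insert a G := by simp [hab.symm, hb]
  have hafilt : a ∉ G.filter (· < b) := fun h => ha (Finset.mem_filter.1 h).1
  have hbfilt : b ∉ G.filter (· < a) := fun h => hb (Finset.mem_filter.1 h).1
  rw [Finset.insert_comm a b G, boundarySign_insert hbG, ← Finset.insert_comm a b G,
    boundarySign_insert haG, boundarySign_insert ha, boundarySign_insert hb]
  rcases hab.lt_or_gt with h | h
  · rw [Finset.filter_insert, if_pos h, Finset.card_insert_of_notMem hafilt, Finset.filter_insert,
      if_neg h.not_gt, pow_succ]
    ring
  · rw [Finset.filter_insert, if_neg h.not_gt, Finset.filter_insert, if_pos h,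
      Finset.card_insert_of_notMem hbfilt, pow_succ]
    ring

noncomputable def tetraBoundary (K : SimplicialComplex n) (T : Finset (Fin n)) :
    ↥(K.iFaces 2) → ℝ :=
  fun H => if (H : Finset (Fin n)) ⊆ T then boundarySign (H : Finset (Fin n)) T else 0

lemma signedBoundary_mulVec_tetraBoundary {T : Finset (Fin n)} (hTc : T.card = 4)
    (hT : ∀ H ⊆ T, H.card = 3 → H ∈ K.faces) :
    (K.signedBoundary 1).mulVec (K.tetraBoundary T) = 0 := by
  funext ⟨G, hG1⟩
  have hG : G.card = 2 := (mem_iFaces.1 hG1).2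
  simp only [Matrix.mulVec, dotProduct, signedBoundary_apply, tetraBoundary, Pi.zero_apply]
  by_cases hGT : G ⊆ T
  swap
  · refine Finset.sum_eq_zero fun H _ => ?_
    split_ifs with h1 h2
    · exact absurd (h1.trans h2) hGT
    all_goals simp
  obtain ⟨a, b, hab, hTG⟩ : ∃ a b, a ≠ b ∧ T \ G = {a, b} :=
    Finset.card_eq_two.1 (by rw [Finset.card_sdiff_of_subset hGT]; omega)
  have ha : a ∈ T \ G := by simp [hTG]
  have hb : b ∈ T \ G := by simp [hTG]
  rw [Finset.mem_sdiff] at ha hb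
  have hT_eq : T = insert a (insert b G) := by
    rw [← Finset.union_sdiff_of_subset hGT, hTG]; ext; simp
  have hmem : ∀ c ∈ T, c ∉ G → insert c G ∈ K.iFaces 2 :=
    fun c hcT hcG => mem_iFaces.2 ⟨hT _ (Finset.insert_subset hcT hGT) (by
      rw [Finset.card_insert_of_notMem hcG, hG]), by rw [Finset.card_insert_of_notMem hcG, hG]⟩
  rw [Fintype.sum_eq_add ⟨_, hmem a ha.1 ha.2⟩ ⟨_, hmem b hb.1 hb.2⟩ ?ne ?rest]
  case ne =>
    intro h
    exact hab ((Finset.insert_inj ha.2).1 (congrArg Subtype.val h))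
  case rest =>
    rintro H ⟨hHa, hHb⟩
    split_ifs with hGH hHT
    · exfalso
      obtain ⟨c, hcG, hcH⟩ := Finset.exists_eq_insert_iff.2
        ⟨hGH, by rw [hG, card_eq_three_of_mem_iFaces_two H.2]⟩
      have hc : c ∈ T \ G := Finset.mem_sdiff.2 ⟨hHT (hcH ▸ Finset.mem_insert_self c _), hcG⟩
      rw [hTG, Finset.mem_insert, Finset.mem_singleton] at hc
      rcases hc with rfl | rfl
      · exact hHa (Subtype.ext hcH.symm)
      · exact hHb (Subtype.ext hcH.symm)
    all_goals simp
  simp only [Finset.subset_insert, if_true, Finset.insert_subset ha.1 hGT,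
    Finset.insert_subset hb.1 hGT]
  rw [hT_eq]
  exact boundarySign_mul_add_boundarySign_mul ha.2 hb.2 hab

lemma tetraBoundary_insert_apply {F F' : Finset (Fin n)} (hF : F ∈ K.Mu u)
    (hF' : F' ∈ K.Mu u) :
    K.tetraBoundary (insert u F) ⟨F', (mem_Mu.1 hF').1⟩
      = if F' = F then boundarySign F (insert u F) else 0 := by
  obtain ⟨hF2, huF⟩ := mem_Mu.1 hF
  obtain ⟨hF'2, huF'⟩ := mem_Mu.1 hF'
  have hsub : F' ⊆ insert u F ↔ F' = F := by
    refine ⟨fun h => Finset.eq_of_subset_of_card_le ?_ ?_, fun h => h ▸ Finset.subset_insert u F'⟩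
    · exact fun z hz => (Finset.mem_insert.1 (h hz)).resolve_left (by rintro rfl; exact huF' hz)
    · rw [card_eq_three_of_mem_iFaces_two hF2, card_eq_three_of_mem_iFaces_two hF'2]
  simp only [tetraBoundary, hsub]
  split_ifs with h <;> simp [h]

lemma linearIndependent_tetraBoundary :
    LinearIndependent ℝ (fun F : ↥(K.Mu u) => K.tetraBoundary (insert u F)) := by
  rw [Fintype.linearIndependent_iff]
  intro g hg F
  have h := congrFun hg ⟨F, (mem_Mu.1 F.2).1⟩
  simp only [Finset.sum_apply, Pi.smul_apply, smul_eq_mul, Pi.zero_apply] at h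
  rw [Fintype.sum_eq_single F fun F' hF' => by
    rw [tetraBoundary_insert_apply F'.2 F.2, if_neg fun h => hF' (Subtype.ext h.symm),
      mul_zero]] at h
  rw [tetraBoundary_insert_apply F.2 F.2, if_pos rfl] at h
  exact (mul_eq_zero.1 h).resolve_right (boundarySign_insert_ne_zero (mem_Mu.1 F.2).2)

lemma card_Mu_le_finrank_ker (hA : K.Apex u) :
    (K.Mu u).card ≤ Module.finrank ℝ (LinearMap.ker (K.signedBoundary 1).mulVecLin) := by
  have hker : ∀ F : ↥(K.Mu u),
      K.tetraBoundary (insert u F) ∈ LinearMap.ker (K.signedBoundary 1).mulVecLin := by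
    intro ⟨F, hF⟩
    obtain ⟨hF2, huF⟩ := mem_Mu.1 hF
    have hFc := card_eq_three_of_mem_iFaces_two hF2
    refine LinearMap.mem_ker.2 (signedBoundary_mulVec_tetraBoundary
      (by rw [Finset.card_insert_of_notMem huF, hFc]) fun H hH hHc => ?_)
    by_cases huH : u ∈ H
    · exact hA H hHc huH
    · have hHF : H ⊆ F := fun z hz =>
        (Finset.mem_insert.1 (hH hz)).resolve_left (by rintro rfl; exact huH hz)
      rw [Finset.eq_of_subset_of_card_le hHF (by rw [hFc, hHc])]
      exact (mem_iFaces.1 hF2).1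
  rw [← Fintype.card_coe]
  exact LinearIndependent.fintype_card_le_finrank (b := fun F => ⟨_, hker F⟩)
    (LinearIndependent.of_comp (LinearMap.ker _).subtype linearIndependent_tetraBoundary)

lemma iFaces_eq_empty_of_isPure {r i : ℕ} (hpure : K.IsPure r) (hri : r < i) :
    K.iFaces i = ∅ := by
  refine Finset.eq_empty_of_forall_notMem fun F hF => ?_
  obtain ⟨hFK, hFc⟩ := mem_iFaces.1 hF
  obtain ⟨G, hFG, hGK, hGmax⟩ := K.faces.exists_le_maximal hFK
  have hGc := hpure G hGK fun H hH hGH => le_antisymm hGH (hGmax hH hGH)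
  have := Finset.card_le_card hFG
  omega

lemma betti_two_eq_finrank_ker (hpure : K.IsPure 2) :
    K.betti 2 = Module.finrank ℝ (LinearMap.ker (K.signedBoundary 1).mulVecLin) := by
  have hrank3 : K.boundaryRank 3 = 0 := by
    have h := Matrix.rank_le_card_width (K.signedBoundary 2)
    simp only [Fintype.card_coe, iFaces_eq_empty_of_isPure hpure (show 2 < 2 + 1 by norm_num),
      Finset.card_empty, Nat.le_zero] at h
    exact h
  have hrn := LinearMap.finrank_range_add_finrank_ker (K.signedBoundary 1).mulVecLin
  rw [Module.finrank_fintype_fun_eq_card, Fintype.card_coe] at hrn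
  change _ + _ = (K.iFaces 2).card at hrn
  have hrank2 :
      K.boundaryRank 2 = Module.finrank ℝ (LinearMap.range (K.signedBoundary 1).mulVecLin) := rfl
  rw [betti, hrank3, hrank2]
  omega

lemma card_Mu_le_betti_two (hA : K.Apex u) (hpure : K.IsPure 2) : (K.Mu u).card ≤ K.betti 2 :=
  betti_two_eq_finrank_ker hpure ▸ card_Mu_le_finrank_ker hA

end Homology

section Bounds

variable {q : ℝ} {f : ↥(K.iFaces 1) → ℝ}

lemma muCofaceSum_nonneg (hf0 : ∀ e, 0 ≤ f e) (p : Finset (Fin n)) : 0 ≤ K.muCofaceSum u f p :=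
  Finset.sum_nonneg fun F _ => bSum_nonneg hf0 F

lemma muCofaceSum_le_card (hle : ∀ F ∈ K.iFaces 2, K.bSum 1 f F ≤ 1) (p : Finset (Fin n)) :
    K.muCofaceSum u f p ≤ (K.Mu u).card := by
  calc K.muCofaceSum u f p ≤ ∑ _F ∈ (K.Mu u).filter (p ⊆ ·), (1 : ℝ) :=
        Finset.sum_le_sum fun F hF => hle F (mem_Mu.1 (Finset.mem_filter.1 hF).1).1
    _ ≤ (K.Mu u).card := by
        rw [Finset.sum_const, nsmul_one]
        exact_mod_cast Finset.card_filter_le _ _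

lemma sum_muCofaceSum_le_sum_ite (hf0 : ∀ e, 0 ≤ f e) (x : Fin n) (t : Finset (Fin n)) :
    ∑ y ∈ t, K.muCofaceSum u f {x, y}
      ≤ ∑ F ∈ K.Mu u, if x ∈ F then 3 * K.bSum 1 f F else 0 := by
  simp only [muCofaceSum, Finset.sum_filter]
  rw [Finset.sum_comm]
  refine Finset.sum_le_sum fun F hF => ?_
  have h := sum_ite_pair_subset_le x t F (bSum_nonneg hf0 (i := 1) (f := f) F)
  rwa [card_eq_three_of_mem_iFaces_two (mem_Mu.1 hF).1, Nat.cast_ofNat] at h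

lemma sum_muCofaceSum_le (hf0 : ∀ e, 0 ≤ f e) (hle : ∀ F ∈ K.iFaces 2, K.bSum 1 f F ≤ 1)
    (x : Fin n) (t : Finset (Fin n)) :
    ∑ y ∈ t, K.muCofaceSum u f {x, y} ≤ 3 * (K.Mu u).card := by
  refine (sum_muCofaceSum_le_sum_ite hf0 x t).trans ?_
  calc _ ≤ ∑ _F ∈ K.Mu u, (3 : ℝ) := Finset.sum_le_sum fun F hF => by
        have := hle F (mem_Mu.1 hF).1
        split_ifs <;> linarith
    _ = 3 * (K.Mu u).card := by rw [Finset.sum_const, nsmul_eq_mul, mul_comm]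

lemma sum_sum_muCofaceSum_le (hf0 : ∀ e, 0 ≤ f e) (hle : ∀ F ∈ K.iFaces 2, K.bSum 1 f F ≤ 1)
    (s : Finset (Fin n)) (t : Fin n → Finset (Fin n)) :
    ∑ x ∈ s, ∑ y ∈ t x, K.muCofaceSum u f {x, y} ≤ 9 * (K.Mu u).card := by
  refine (Finset.sum_le_sum fun x _ => sum_muCofaceSum_le_sum_ite hf0 x (t x)).trans ?_
  rw [Finset.sum_comm]
  calc _ ≤ ∑ F ∈ K.Mu u, (F.card : ℝ) * (3 * K.bSum 1 f F) :=
        Finset.sum_le_sum fun F _ =>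
          sum_ite_mem_le s F (by linarith [bSum_nonneg hf0 (i := 1) (f := f) F])
    _ ≤ ∑ _F ∈ K.Mu u, (9 : ℝ) := Finset.sum_le_sum fun F hF => by
        obtain ⟨hF2, -⟩ := mem_Mu.1 hF
        rw [card_eq_three_of_mem_iFaces_two hF2, Nat.cast_ofNat]
        linarith [hle F hF2]
    _ = 9 * (K.Mu u).card := by rw [Finset.sum_const, nsmul_eq_mul, mul_comm]

lemma mul_bSum_base_edge_le (hA : K.Apex u) (hn : 3 ≤ n) (hf : (K.Qup 1).mulVec f = q • f)
    (hle : ∀ F ∈ K.iFaces 2, K.bSum 1 f F ≤ 1) {p : Finset (Fin n)} (hp : p.card = 2)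
    (hu : u ∉ p) : q * K.bSum 1 f p ≤ 1 + (K.Mu u).card := by
  rw [mul_bSum_base_edge hA hn hf hp hu]
  exact add_le_add (hle _ (mem_iFaces_two_of_apex hA (by rw [Finset.card_insert_of_notMem hu, hp])
    (Finset.mem_insert_self u p))) (muCofaceSum_le_card hle p)

lemma mul_muCofaceSum_le (hA : K.Apex u) (hn : 3 ≤ n) (hf : (K.Qup 1).mulVec f = q • f)
    (hle : ∀ F ∈ K.iFaces 2, K.bSum 1 f F ≤ 1) (p : Finset (Fin n)) :
    q * K.muCofaceSum u f p ≤ 3 * (1 + (K.Mu u).card) * (K.Mu u).card := by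
  have hface : ∀ F ∈ K.Mu u, q * K.bSum 1 f F ≤ 3 * (1 + (K.Mu u).card) := by
    intro F hF
    obtain ⟨hF2, huF⟩ := mem_Mu.1 hF
    obtain ⟨a, b, c, hab, hac, hbc, rfl⟩ := Finset.card_eq_three.1 (mem_iFaces.1 hF2).2
    have hedge : ∀ y z, y ∈ ({a, b, c} : Finset (Fin n)) → z ∈ ({a, b, c} : Finset (Fin n)) →
        y ≠ z → q * K.bSum 1 f {y, z} ≤ 1 + (K.Mu u).card := fun y z hy hz hyz =>
      mul_bSum_base_edge_le hA hn hf hle (Finset.card_pair hyz)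
        (by simp only [Finset.mem_insert, Finset.mem_singleton, not_or]
            exact ⟨fun h => huF (h ▸ hy), fun h => huF (h ▸ hz)⟩)
    rw [bSum_triple (mem_iFaces.1 hF2).1 hab hac hbc]
    linarith [hedge a b (by simp) (by simp) hab, hedge a c (by simp) (by simp) hac,
      hedge b c (by simp) (by simp) hbc]
  rw [muCofaceSum, Finset.mul_sum]
  calc _ ≤ ∑ _F ∈ (K.Mu u).filter (p ⊆ ·), 3 * (1 + ((K.Mu u).card : ℝ)) :=
        Finset.sum_le_sum fun F hF => hface F (Finset.mem_filter.1 hF).1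
    _ ≤ _ := by
        rw [Finset.sum_const, nsmul_eq_mul, mul_comm]
        exact mul_le_mul_of_nonneg_left (by exact_mod_cast Finset.card_filter_le _ _)
          (by positivity)

end Bounds

section Estimate

variable {q : ℝ} {f : ↥(K.iFaces 1) → ℝ}

lemma mul_sum_bSum_apex_edges (hA : K.Apex u) (hn : 3 ≤ n) (hf : (K.Qup 1).mulVec f = q • f) :
    q * ∑ x ∈ ({u}ᶜ : Finset (Fin n)), K.bSum 1 f {u, x}
      = (2 * n - 4) * ∑ x ∈ ({u}ᶜ : Finset (Fin n)), K.bSum 1 f {u, x}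
        + ∑ x ∈ ({u}ᶜ : Finset (Fin n)), ∑ y ∈ ({u}ᶜ : Finset (Fin n)).erase x,
            K.bSum 1 f {x, y} := by
  rw [Finset.mul_sum, sum_eq_of_forall_eq_mul_add _ fun x hx =>
    mul_bSum_apex_edge hA hn hf (by simpa using hx), cast_card_compl_singleton]
  ring

lemma mul_sum_sum_bSum_base_edges (hA : K.Apex u) (hn : 3 ≤ n)
    (hf : (K.Qup 1).mulVec f = q • f) :
    q * ∑ x ∈ ({u}ᶜ : Finset (Fin n)), ∑ y ∈ ({u}ᶜ : Finset (Fin n)).erase x, K.bSum 1 f {x, y}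
      = (2 * n - 4) * ∑ x ∈ ({u}ᶜ : Finset (Fin n)), K.bSum 1 f {u, x}
        + ∑ x ∈ ({u}ᶜ : Finset (Fin n)), ∑ y ∈ ({u}ᶜ : Finset (Fin n)).erase x, K.bSum 1 f {x, y}
        + ∑ x ∈ ({u}ᶜ : Finset (Fin n)), ∑ y ∈ ({u}ᶜ : Finset (Fin n)).erase x,
            K.muCofaceSum u f {x, y} := by
  rw [Finset.mul_sum, sum_eq_of_forall_eq_mul_add _ fun x hx =>
    (mul_sum_bSum_base_edge hA hn hf (by simpa using hx)).trans (add_assoc _ _ _),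
    cast_card_compl_singleton, Finset.sum_add_distrib]
  ring

lemma eigenvalue_window_of_apex (hA : K.Apex u) (hn : 30 ≤ n) (hf : (K.Qup 1).mulVec f = q • f)
    (hf0 : ∀ e, 0 ≤ f e) (hle : ∀ F ∈ K.iFaces 2, K.bSum 1 f F ≤ 1) (hM : (K.Mu u).card ≤ 2)
    {v w : Fin n} (hF0 : {u, v, w} ∈ K.iFaces 2) (h1 : K.bSum 1 f {u, v, w} = 1) :
    2 * n - 4 ≤ q ∧ q ≤ 2 * n - 2 := by
  obtain ⟨huv, huw, hvw⟩ :=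
    Finset.card_triple_eq_three_iff.1 (card_eq_three_of_mem_iFaces_two hF0)
  set V := ({u}ᶜ : Finset (Fin n)) with hV
  have hmemV : ∀ y, y ∈ V ↔ y ≠ u := by simp [hV]
  have hM' : ((K.Mu u).card : ℝ) ≤ 2 := by exact_mod_cast hM
  have hvwG : K.bSum 1 f {v, w} ≤ ∑ x ∈ V, ∑ y ∈ V.erase x, K.bSum 1 f {x, y} :=
    (Finset.single_le_sum (f := fun y => K.bSum 1 f {v, y}) (fun y _ => bSum_nonneg hf0 _)
      (Finset.mem_erase.2 ⟨hvw.symm, (hmemV w).2 huw.symm⟩)).trans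
    (Finset.single_le_sum (f := fun x => ∑ y ∈ V.erase x, K.bSum 1 f {x, y})
      (fun x _ => Finset.sum_nonneg fun y _ => bSum_nonneg hf0 _) ((hmemV v).2 huv.symm))
  have hvwS : 1 - K.bSum 1 f {v, w} ≤ ∑ y ∈ V, K.bSum 1 f {u, y} := by
    calc 1 - K.bSum 1 f {v, w} = ∑ y ∈ {v, w}, K.bSum 1 f {u, y} := by
          rw [Finset.sum_pair hvw, ← h1, bSum_triple (mem_iFaces.1 hF0).1 huv huw hvw]; ring
      _ ≤ _ := Finset.sum_le_sum_of_subset_of_nonneg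
          (by simp [Finset.insert_subset_iff, hmemV, huv.symm, huw.symm])
          fun y _ _ => bSum_nonneg hf0 _
  have hqvw : q * K.bSum 1 f {v, w} ≤ 3 := by
    linarith [mul_bSum_base_edge_le hA (by omega) hf hle (Finset.card_pair hvw)
      (by simp [huv, huw])]
  have hSE : ∑ x ∈ V, ∑ y ∈ V.erase x, K.muCofaceSum u f {x, y} ≤ 18 := by
    linarith [sum_sum_muCofaceSum_le hf0 hle V (fun x => V.erase x) (u := u)]
  exact le_and_le_of_sum_eqns (by exact_mod_cast hn)
    (Finset.sum_nonneg fun y _ => bSum_nonneg hf0 _) (bSum_nonneg hf0 _) hvwG hvwS hqvw hSE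
    (mul_sum_bSum_apex_edges hA (by omega) hf) (mul_sum_sum_bSum_base_edges hA (by omega) hf)

theorem abs_bSum_apex_edge_sub_le (hA : K.Apex u) (hn : 30 ≤ n)
    (hf : (K.Qup 1).mulVec f = q • f) (hf0 : ∀ e, 0 ≤ f e)
    (hle : ∀ F ∈ K.iFaces 2, K.bSum 1 f F ≤ 1) (hM : (K.Mu u).card ≤ 2) {v w : Fin n}
    (hF0 : {u, v, w} ∈ K.iFaces 2) (h1 : K.bSum 1 f {u, v, w} = 1) {x : Fin n} (hx : x ≠ u) :
    |K.bSum 1 f {u, x} - 1 / 2 + 1 / (4 * n)| ≤ 12 / n ^ 2 := by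
  obtain ⟨hq, hq'⟩ := eigenvalue_window_of_apex hA hn hf hf0 hle hM hF0 h1
  obtain ⟨huv, huw, hvw⟩ :=
    Finset.card_triple_eq_three_iff.1 (card_eq_three_of_mem_iFaces_two hF0)
  have hnR : (30 : ℝ) ≤ n := by exact_mod_cast hn
  have hM' : ((K.Mu u).card : ℝ) ≤ 2 := by exact_mod_cast hM
  set E := fun y => ∑ z ∈ ({u}ᶜ : Finset (Fin n)).erase y, K.muCofaceSum u f {y, z}
  have hE : ∀ y, 0 ≤ E y ∧ E y ≤ 6 := fun y =>
    ⟨Finset.sum_nonneg fun z _ => muCofaceSum_nonneg hf0 _,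
      by linarith [sum_muCofaceSum_le hf0 hle y (({u}ᶜ : Finset (Fin n)).erase y) (u := u)]⟩
  set D := (q - 1) * (q - (n - 3)) - (n - 3)
  have hD : ∀ y ≠ u, D * K.bSum 1 f {u, y}
      = q * ∑ z ∈ ({u}ᶜ : Finset (Fin n)), K.bSum 1 f {u, z} + E y := fun y hy =>
    mul_eq_add_of_eqns (mul_bSum_apex_edge hA (by omega) hf hy)
      (mul_sum_bSum_base_edge hA (by omega) hf hy)
  have hDn : (n : ℝ) ^ 2 ≤ D := by nlinarith
  have hclose : ∀ y ≠ u, |K.bSum 1 f {u, x} - K.bSum 1 f {u, y}| ≤ 6 / n ^ 2 := fun y hy =>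
    abs_le_div_of_mul_eq (y := E x - E y) (by positivity) hDn
      (by linear_combination hD x hx - hD y hy)
      (abs_sub_le_iff.2 ⟨by linarith [hE x, hE y], by linarith [hE x, hE y]⟩)
  have hvw_eq := mul_bSum_base_edge hA (by omega) hf (Finset.card_pair hvw) (by simp [huv, huw])
  have htri := bSum_triple (f := f) (mem_iFaces.1 hF0).1 huv huw hvw
  have hε : q * K.muCofaceSum u f {v, w} ≤ 18 := by
    nlinarith [mul_muCofaceSum_le hA (by omega) hf hle {v, w} (u := u),
      Nat.cast_nonneg (α := ℝ) (K.Mu u).card]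
  have hmid := abs_half_sub_le (by linarith) hq hq' (s := K.bSum 1 f {u, v} + K.bSum 1 f {u, w})
    (by linear_combination (q - 1) * h1 - q * htri - hvw_eq) (muCofaceSum_nonneg hf0 _) hε
  calc _ = |(K.bSum 1 f {u, x} - K.bSum 1 f {u, v}) / 2
        + (K.bSum 1 f {u, x} - K.bSum 1 f {u, w}) / 2
        + ((K.bSum 1 f {u, v} + K.bSum 1 f {u, w}) / 2 - 1 / 2 + 1 / (4 * n))| := by ring_nf
    _ ≤ 6 / n ^ 2 / 2 + 6 / n ^ 2 / 2 + 6 / n ^ 2 := by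
        refine (abs_add_three _ _ _).trans ?_
        rw [abs_div, abs_div, abs_two]
        gcongr
        exacts [hclose v huv.symm, hclose w huw.symm]
    _ = 12 / n ^ 2 := by ring

end Estimate

end SimplicialComplex

/-- under the Setup with `t = 2` plus the Apex assumption, for large `n`:
for every vertex `x ≠ u`, `| f({u,x}) − 1/2 + 1/(4n) | ≤ C/n²`. -/
theorem stmt19 :
    ∃ (C : ℝ) (N : ℕ), ∀ n, N ≤ n → ∀ (K : SimplicialComplex n) (f : ↥(K.iFaces 1) → ℝ)
      (u v w : Fin n), Setup n 2 K f u v w → K.Apex u →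
      ∀ x : Fin n, x ≠ u → ∀ h : ({u,x} : Finset (Fin n)) ∈ K.iFaces 1,
        |f ⟨{u,x}, h⟩ - 1/2 + 1/(4*(n:ℝ))| ≤ C/(n:ℝ)^2 := by
  refine ⟨12, 30, fun n hn K f u v w hSetup hA x hx h => ?_⟩
  obtain ⟨⟨hpure, hbetti⟩, -, -, hf0, hf, hF0, hle, h1, -, -⟩ := hSetup
  rw [← SimplicialComplex.bSum_of_mem (f := f) h]
  exact SimplicialComplex.abs_bSum_apex_edge_sub_le hA hn hf hf0 hle
    (hbetti ▸ SimplicialComplex.card_Mu_le_betti_two hA hpure) hF0 h1 hx
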